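/- arXiv:2101.05713 — 2 statements merged into one kernel-verified Lean document; each statement's English description precedes it below -/
import Mathlib

section
/- For all integers m ≥ 1, r ≥ 0, k ≥ 0, and n ≥ 1, the power sum S_k^{m,r}(n) = Σ_{ℓ=0}^{n-1} (ℓm + r)^k satisfies S_k^{m,r}(n) = Σ_{t=1}^{k+1} c_{k,t}^{m,r} n^t, where c_{k,t}^{m,r} = (m^{t-1}/(k+1)) · C(k+1, t) · Σ_{j=0}^{k+1-t} (-1)^j · (m^j j!/(j+1)) · W_{m,r}(k+1-t, j), and W_{m,r}(s,j) = (1/(m^j j!)) Σ_{i=0}^{j} (-1)^{j-i} C(j,i) (mi + r)^s are the r-Whitney numbers of the second kind. -/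
/-- The `r`-Whitney numbers of the second kind
`W_{m,r}(s,j) = (1/(m^j j!)) Σ_{i=0}^{j} (-1)^{j-i} C(j,i) (mi + r)^s`. -/
def rWhitney (m r s j : ℕ) : ℚ :=
  (1 / ((m : ℚ) ^ j * (Nat.factorial j : ℚ))) *
    ∑ i ∈ Finset.range (j + 1),
      (-1 : ℚ) ^ (j - i) * (Nat.choose j i : ℚ) * ((m : ℚ) * i + r) ^ s

/-! Write `Δ` for the forward difference with step `h` and put
`G_s(y) = Σ_{j ≤ s} (-1)^j / (j+1) · Δ^j[x^s](y)`; since `m^j j! W_{m,r}(s,j) = Δ^j[x^s](r)` for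
`h = m`, the inner sums of the coefficients are `G_{k+1-t}(r)`. As `log (1 + Δ) = h · d/dx` on
polynomials, `G_{k+1}(y + h) - G_{k+1}(y) = (k+1) h y^k`, so `(k+1) m S_k^{m,r}(n)` telescopes to
`G_{k+1}(r + nm) - G_{k+1}(r)`. Finally `G` is an Appell sequence,
`G_{k+1}(r + nm) = Σ_t C(k+1,t) G_{k+1-t}(r) (nm)^t`, and its terms with `t ≥ 1` are the claimed
ones. -/

open Finset fwdDiff

section CommRing

variable {R : Type*} [CommRing R] (h : R)

theorem fwdDiff_iter_succ_id_mul (g : R → R) (n : ℕ) (y : R) :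
    Δ_[h] ^[n + 1] (fun x ↦ x * g x) y =
      y * Δ_[h] ^[n + 1] g y + (n + 1) * h * Δ_[h] ^[n] g (y + h) := by
  induction n generalizing y with
  | zero =>
    rw [zero_add, Function.iterate_one, Function.iterate_zero_apply]
    simp only [fwdDiff]
    push_cast
    ring
  | succ n ih =>
    rw [Function.iterate_succ_apply', funext ih]
    simp only [Function.iterate_succ_apply', fwdDiff]
    push_cast
    ring

theorem fwdDiff_iter_pow_eq_zero_of_lt' {s j : ℕ} (hsj : s < j) (y : R) :
    Δ_[h] ^[j] (fun x ↦ x ^ s) y = 0 := by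
  induction s generalizing j y with
  | zero =>
    obtain ⟨j, rfl⟩ : ∃ j', j = j' + 1 := ⟨j - 1, by omega⟩
    simp only [pow_zero, Function.iterate_succ_apply, fwdDiff_const]
    simp [fwdDiff_iter_eq_sum_shift]
  | succ s ih =>
    obtain ⟨j, rfl⟩ : ∃ j', j = j' + 1 := ⟨j - 1, by omega⟩
    simp_rw [pow_succ']
    rw [fwdDiff_iter_succ_id_mul, ih (by omega), ih (by omega)]
    ring

/-- `(1 + Δ)⁻¹ = Σ_j (-Δ)^j` on functions killed by `Δ^(N+1)`. -/
theorem sum_neg_one_pow_mul_fwdDiff_iter_add {f : R → R} {N : ℕ}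
    (hf : ∀ x, Δ_[h] ^[N + 1] f x = 0) (y : R) :
    ∑ j ∈ range (N + 1), (-1) ^ j * Δ_[h] ^[j] f (y + h) = f y := by
  have step : ∀ j, (-1) ^ j * Δ_[h] ^[j] f (y + h) =
      (-1) ^ j * Δ_[h] ^[j] f y - (-1) ^ (j + 1) * Δ_[h] ^[j + 1] f y := by
    intro j
    rw [Function.iterate_succ_apply', fwdDiff]
    ring
  simp_rw [step]
  rw [sum_range_sub' (fun j ↦ (-1) ^ j * Δ_[h] ^[j] f y), hf]
  simp

theorem fwdDiff_iter_pow_add (s j : ℕ) (y z : R) :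
    Δ_[h] ^[j] (fun x ↦ x ^ s) (y + z) =
      ∑ t ∈ range (s + 1), s.choose t * z ^ t * Δ_[h] ^[j] (fun x ↦ x ^ (s - t)) y := by
  simp_rw [fwdDiff_iter_eq_sum_shift, mul_sum]
  rw [sum_comm]
  refine sum_congr rfl fun i _ ↦ ?_
  rw [show y + z + i • h = z + (y + i • h) by abel, add_pow, smul_sum]
  refine sum_congr rfl fun t _ ↦ ?_
  simp only [zsmul_eq_mul]
  ring

end CommRing

section Field

variable {K : Type*} [Field K] (h : K)

/-- This is `h^s B_s(y/h)` for the Bernoulli polynomial `B_s` (with `B_1(x) = x - 1/2`). -/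
def fwdDiffBernoulli (s : ℕ) (y : K) : K :=
  ∑ j ∈ range (s + 1), (-1) ^ j / (j + 1) * Δ_[h] ^[j] (fun x ↦ x ^ s) y

theorem fwdDiffBernoulli_eq_sum_range {s N : ℕ} (hsN : s ≤ N) (y : K) :
    fwdDiffBernoulli h s y =
      ∑ j ∈ range (N + 1), (-1) ^ j / (j + 1) * Δ_[h] ^[j] (fun x ↦ x ^ s) y := by
  refine sum_subset (range_subset_range.2 (by omega)) fun j _ hj ↦ ?_
  rw [fwdDiff_iter_pow_eq_zero_of_lt' h (by simpa using hj), mul_zero]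

/-- The series `log (1 + Δ) = h · d/dx`, applied to `x^(s+1)`. -/
theorem log_one_add_fwdDiff_pow [CharZero K] (s : ℕ) (y : K) :
    ∑ j ∈ range (s + 1), (-1) ^ j / (j + 1) * Δ_[h] ^[j + 1] (fun x ↦ x ^ (s + 1)) y =
      (s + 1) * h * y ^ s := by
  induction s generalizing y with
  | zero => simp [fwdDiff]
  | succ s ih =>
    have leibniz : ∀ j : ℕ, (-1) ^ j / (j + 1) * Δ_[h] ^[j + 1] (fun x ↦ x ^ (s + 2)) y =
        y * ((-1) ^ j / (j + 1) * Δ_[h] ^[j + 1] (fun x ↦ x ^ (s + 1)) y) +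
          h * ((-1) ^ j * Δ_[h] ^[j] (fun x ↦ x ^ (s + 1)) (y + h)) := by
      intro j
      simp_rw [pow_succ' _ (s + 1)]
      rw [fwdDiff_iter_succ_id_mul]
      field_simp
    rw [sum_congr rfl fun j _ ↦ leibniz j, sum_add_distrib, ← mul_sum, ← mul_sum,
      sum_range_succ, fwdDiff_iter_pow_eq_zero_of_lt' h (by omega), mul_zero, add_zero, ih,
      sum_neg_one_pow_mul_fwdDiff_iter_add h (fun x ↦ fwdDiff_iter_pow_eq_zero_of_lt' h (by omega) x)]
    push_cast
    ring

theorem fwdDiffBernoulli_add_sub [CharZero K] (s : ℕ) (y : K) :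
    fwdDiffBernoulli h (s + 1) (y + h) - fwdDiffBernoulli h (s + 1) y = (s + 1) * h * y ^ s := by
  have difference : ∀ j : ℕ,
      (-1) ^ j / (j + 1) * Δ_[h] ^[j] (fun x ↦ x ^ (s + 1)) (y + h) -
        (-1) ^ j / (j + 1) * Δ_[h] ^[j] (fun x ↦ x ^ (s + 1)) y =
      (-1) ^ j / (j + 1) * Δ_[h] ^[j + 1] (fun x ↦ x ^ (s + 1)) y := by
    intro j
    rw [Function.iterate_succ_apply', fwdDiff, mul_sub]
  rw [fwdDiffBernoulli, fwdDiffBernoulli, ← sum_sub_distrib, sum_congr rfl fun j _ ↦ difference j,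
    sum_range_succ, fwdDiff_iter_pow_eq_zero_of_lt' h (by omega), mul_zero, add_zero,
    log_one_add_fwdDiff_pow]

theorem fwdDiffBernoulli_add (s : ℕ) (y z : K) :
    fwdDiffBernoulli h s (y + z) =
      ∑ t ∈ range (s + 1), s.choose t * fwdDiffBernoulli h (s - t) y * z ^ t := by
  rw [fwdDiffBernoulli]
  simp_rw [fwdDiff_iter_pow_add, mul_sum]
  rw [sum_comm]
  refine sum_congr rfl fun t _ ↦ ?_
  rw [fwdDiffBernoulli_eq_sum_range h (Nat.sub_le s t), mul_sum, sum_mul]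
  refine sum_congr rfl fun j _ ↦ ?_
  ring

theorem fwdDiffBernoulli_add_mul_sub [CharZero K] (k n : ℕ) (y : K) :
    fwdDiffBernoulli h (k + 1) (y + n * h) - fwdDiffBernoulli h (k + 1) y =
      (k + 1) * h * ∑ ℓ ∈ range n, (y + ℓ * h) ^ k := by
  have telescope := sum_range_sub (fun ℓ : ℕ ↦ fwdDiffBernoulli h (k + 1) (y + ℓ * h)) n
  simp only [Nat.cast_zero, zero_mul, add_zero] at telescope
  rw [← telescope, mul_sum]
  refine sum_congr rfl fun ℓ _ ↦ ?_
  rw [Nat.cast_succ, ← fwdDiffBernoulli_add_sub]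
  ring_nf

end Field

theorem rWhitney_eq_fwdDiff (m r s j : ℕ) :
    rWhitney m r s j = Δ_[(m : ℚ)] ^[j] (fun x ↦ x ^ s) r / (m ^ j * j.factorial) := by
  rw [rWhitney, fwdDiff_iter_eq_sum_shift, one_div_mul_eq_div]
  congr 1
  refine sum_congr rfl fun i _ ↦ ?_
  simp only [zsmul_eq_mul, nsmul_eq_mul]
  push_cast
  ring

theorem sum_rWhitney_eq_fwdDiffBernoulli {m : ℕ} (hm : (m : ℚ) ≠ 0) (r s : ℕ) :
    ∑ j ∈ range (s + 1), (-1 : ℚ) ^ j * ((m : ℚ) ^ j * j.factorial / (j + 1)) * rWhitney m r s j =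
      fwdDiffBernoulli (m : ℚ) s r := by
  refine sum_congr rfl fun j _ ↦ ?_
  rw [rWhitney_eq_fwdDiff]
  field_simp

theorem power_sum_coeff_whitney_general (m r k n : ℕ) (hm : 1 ≤ m) :
    ∑ ℓ ∈ Finset.range n, ((ℓ : ℚ) * m + r) ^ k =
      ∑ t ∈ Finset.Icc 1 (k + 1),
        ((m : ℚ) ^ (t - 1) / (k + 1) * (Nat.choose (k + 1) t : ℚ) *
          ∑ j ∈ Finset.range (k + 1 - t + 1),
            (-1 : ℚ) ^ j * ((m : ℚ) ^ j * (Nat.factorial j : ℚ) / (j + 1)) *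
              rWhitney m r (k + 1 - t) j) * (n : ℚ) ^ t := by
  have hm0 : (m : ℚ) ≠ 0 := Nat.cast_ne_zero.2 (by omega)
  have hk : (k : ℚ) + 1 ≠ 0 := by positivity
  have faulhaber := fwdDiffBernoulli_add_mul_sub (m : ℚ) k n r
  rw [fwdDiffBernoulli_add, range_eq_Ico, sum_eq_sum_Ico_succ_bot (by omega),
    Ico_add_one_right_eq_Icc] at faulhaber
  simp only [zero_add, Nat.choose_zero_right, Nat.cast_one, one_mul, Nat.sub_zero, pow_zero,
    mul_one, add_sub_cancel_left] at faulhaber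
  simp_rw [sum_rWhitney_eq_fwdDiffBernoulli hm0]
  apply mul_left_cancel₀ (mul_ne_zero hk hm0)
  calc ((k : ℚ) + 1) * m * ∑ ℓ ∈ range n, ((ℓ : ℚ) * m + r) ^ k
      = (k + 1) * m * ∑ ℓ ∈ range n, ((r : ℚ) + ℓ * m) ^ k := by simp_rw [add_comm (_ * _ : ℚ)]
    _ = _ := by
      rw [← faulhaber, mul_sum]
      refine sum_congr rfl fun t ht ↦ ?_
      obtain ⟨t, rfl⟩ : ∃ t', t = t' + 1 := ⟨t - 1, by grind⟩
      rw [Nat.add_sub_cancel]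
      field_simp
      ring

/-- `S_k^{m,r}(n) = Σ_{t=1}^{k+1} c_{k,t}^{m,r} n^t` with
`c_{k,t}^{m,r} = (m^{t-1}/(k+1)) C(k+1,t) Σ_{j=0}^{k+1-t} (-1)^j (m^j j!/(j+1)) W_{m,r}(k+1-t,j)`. -/
theorem power_sum_coeff_whitney (m r k n : ℕ) (hm : 1 ≤ m) (hn : 1 ≤ n) :
    ∑ ℓ ∈ Finset.range n, ((ℓ : ℚ) * m + r) ^ k =
      ∑ t ∈ Finset.Icc 1 (k + 1),
        ((m : ℚ) ^ (t - 1) / (k + 1) * (Nat.choose (k + 1) t : ℚ) *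
          ∑ j ∈ Finset.range (k + 1 - t + 1),
            (-1 : ℚ) ^ j * ((m : ℚ) ^ j * (Nat.factorial j : ℚ) / (j + 1)) *
              rWhitney m r (k + 1 - t) j) * (n : ℚ) ^ t :=
  power_sum_coeff_whitney_general m r k n hm
end

section
/- For every integer k ≥ 0, the k-th Bernoulli number satisfies B_k = (-1)^k · Σ_{j=0}^{k} Σ_{i=j}^{k} ((j+1)/(i+1)) · S_1(i+1, j+1) · S_2(k, i), where S_1 are the signed Stirling numbers of the first kind and S_2 are the Stirling numbers of the second kind. -/
/-- The signed Stirling numbers of the first kind, as coefficients of the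
falling factorial `x(x-1)⋯(x-n+1) = Σ_{j=0}^{n} S_1(n,j) x^j`. -/
noncomputable def stirlingFirst (n j : ℕ) : ℚ :=
  (∏ i ∈ Finset.range n, (Polynomial.X - Polynomial.C (i : ℚ))).coeff j

/-- The (unsigned) Stirling numbers of the second kind
`S_2(k,j) = (1/j!) Σ_{i=0}^{j} (-1)^{j-i} C(j,i) i^k`. -/
def stirlingSecond (k j : ℕ) : ℚ :=
  (1 / (Nat.factorial j : ℚ)) *
    ∑ i ∈ Finset.range (j + 1), (-1 : ℚ) ^ (j - i) * (Nat.choose j i : ℚ) * (i : ℚ) ^ k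

/-!
Expanding `x^k = Σ_i S_2(k,i) (x)_i` in falling factorials and summing with
`Σ_{x<n} (x)_i = (n)_{i+1}/(i+1)` gives the power-sum polynomial
`F_k(x) = Σ_i S_2(k,i)/(i+1) (x)_{i+1}`, with `F_k(n) = Σ_{x<n} x^k`. Faulhaber's formula
identifies `(k+1) F_k` with `B_{k+1}(x) - B_{k+1}`, so `F_k' = B_k(x)` and
`(-1)^k B_k = B_k(1) = F_k'(1) = Σ_i S_2(k,i)/(i+1) (x)_{i+1}'(1)`; the last derivative is read
off from the coefficients `S_1(i+1, j+1)` of `(x)_{i+1}`.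
-/

section

open Finset Polynomial fwdDiff
open scoped Nat

theorem factorial_mul_stirlingSecond_eq_fwdDiff_iter (k j : ℕ) :
    (j ! : ℚ) * stirlingSecond k j = (Δ_[1])^[j] (fun r : ℚ ↦ r ^ k) 0 := by
  rw [fwdDiff_iter_eq_sum_shift, stirlingSecond, ← mul_assoc, mul_one_div_cancel (by positivity),
    one_mul]
  refine sum_congr rfl fun i _ ↦ ?_
  simp [zsmul_eq_mul, mul_assoc]

theorem stirlingSecond_eq_zero_of_lt {k j : ℕ} (h : k < j) : stirlingSecond k j = 0 := by
  have := factorial_mul_stirlingSecond_eq_fwdDiff_iter k j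
  rw [fwdDiff_iter_pow_eq_zero_of_lt h, Pi.zero_apply] at this
  exact (mul_eq_zero.mp this).resolve_left (by positivity)

theorem pow_eq_sum_stirlingSecond_mul_descPochhammer (k : ℕ) :
    (X ^ k : ℚ[X]) = ∑ j ∈ range (k + 1), C (stirlingSecond k j) * descPochhammer ℚ j := by
  -- Newton's formula at the points `m + k`, where the differences of order `> k` vanish.
  refine eq_of_infinite_eval_eq _ _ <| (Set.infinite_range_of_injective
    (fun a b h ↦ by simpa using h : Function.Injective fun m : ℕ ↦ ((m + k : ℕ) : ℚ))).mono ?_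
  rintro _ ⟨m, rfl⟩
  have newton := shift_eq_sum_fwdDiff_iter 1 (fun r : ℚ ↦ r ^ k) (m + k) 0
  simp only [zero_add, nsmul_one] at newton
  simp only [Set.mem_ofPred_eq, eval_pow, eval_X, eval_finsetSum, eval_mul, eval_C,
    descPochhammer_eval_eq_descFactorial, newton]
  rw [← sum_subset (range_subset_range.mpr (by omega : k + 1 ≤ m + k + 1))]
  · refine sum_congr rfl fun j _ ↦ ?_
    rw [← factorial_mul_stirlingSecond_eq_fwdDiff_iter, Nat.descFactorial_eq_factorial_mul_choose]
    push_cast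
    ring
  · intro j _ hj
    rw [← factorial_mul_stirlingSecond_eq_fwdDiff_iter,
      stirlingSecond_eq_zero_of_lt (by simpa using hj), mul_zero, smul_zero]

theorem descPochhammer_succ_eval_add_one_sub {R : Type*} [CommRing R] (i : ℕ) (x : R) :
    (descPochhammer R (i + 1)).eval (x + 1) - (descPochhammer R (i + 1)).eval x
      = (i + 1) * (descPochhammer R i).eval x := by
  nth_rw 1 [descPochhammer_succ_left]
  rw [descPochhammer_succ_eval, eval_mul, eval_X, eval_comp, eval_sub, eval_X, eval_one,
    add_sub_cancel_right]
  ring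

theorem sum_range_descPochhammer_eval {R : Type*} [CommRing R] (i n : ℕ) :
    (i + 1) * ∑ x ∈ range n, (descPochhammer R i).eval (x : R)
      = (descPochhammer R (i + 1)).eval (n : R) := by
  simp_rw [mul_sum, ← descPochhammer_succ_eval_add_one_sub]
  simpa using sum_range_sub (fun x : ℕ ↦ (descPochhammer R (i + 1)).eval (x : R)) n

noncomputable def powerSumPoly (k : ℕ) : ℚ[X] :=
  ∑ i ∈ range (k + 1), C (stirlingSecond k i / (i + 1)) * descPochhammer ℚ (i + 1)

theorem powerSumPoly_eval_natCast (k n : ℕ) :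
    (powerSumPoly k).eval (n : ℚ) = ∑ x ∈ range n, (x : ℚ) ^ k := by
  have hpow (x : ℚ) :
      x ^ k = ∑ i ∈ range (k + 1), stirlingSecond k i * (descPochhammer ℚ i).eval x := by
    simpa [eval_finsetSum] using
      congrArg (eval x) (pow_eq_sum_stirlingSecond_mul_descPochhammer k)
  simp_rw [hpow, powerSumPoly, eval_finsetSum, eval_mul, eval_C, ← sum_range_descPochhammer_eval]
  rw [sum_comm]
  refine sum_congr rfl fun i _ ↦ ?_
  rw [← mul_sum]
  field_simp

theorem natCast_add_one_mul_powerSumPoly (k : ℕ) :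
    ((k : ℚ[X]) + 1) * powerSumPoly k
      = Polynomial.bernoulli (k + 1) - C (_root_.bernoulli (k + 1)) := by
  refine eq_of_infinite_eval_eq _ _ <| (Set.infinite_range_of_injective Nat.cast_injective).mono ?_
  rintro _ ⟨n, rfl⟩
  simpa [powerSumPoly_eval_natCast] using sum_range_pow_eq_bernoulli_sub n k

theorem derivative_powerSumPoly (k : ℕ) :
    derivative (powerSumPoly k) = Polynomial.bernoulli k := by
  have h := congrArg derivative (natCast_add_one_mul_powerSumPoly k)
  rw [← Nat.cast_add_one, derivative_natCast_mul, derivative_sub, derivative_C, sub_zero,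
    derivative_bernoulli_add_one, ← Nat.cast_add_one] at h
  exact mul_left_cancel₀ (Nat.cast_ne_zero.mpr k.succ_ne_zero) h

theorem bernoulli'_eq_sum_stirlingSecond_mul_derivative_descPochhammer (k : ℕ) :
    bernoulli' k = ∑ i ∈ range (k + 1),
      stirlingSecond k i / (i + 1) * (derivative (descPochhammer ℚ (i + 1))).eval 1 := by
  simp only [← bernoulli_eval_one, ← derivative_powerSumPoly, powerSumPoly, derivative_sum,
    eval_finsetSum, derivative_C_mul, eval_mul, eval_C]

theorem derivative_eval_one_eq_sum_range {R : Type*} [CommSemiring R] {p : R[X]} {n : ℕ}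
    (hp : p.natDegree ≤ n + 1) :
    p.derivative.eval 1 = ∑ j ∈ range (n + 1), ((j : R) + 1) * p.coeff (j + 1) := by
  rw [eval_eq_sum_range' (n := n + 1) ((natDegree_derivative_le p).trans_lt (by omega))]
  simp [coeff_derivative, mul_comm]

theorem descPochhammer_eq_prod_range {R : Type*} [CommRing R] (n : ℕ) :
    descPochhammer R n = ∏ i ∈ range n, (X - C (i : R)) := by
  induction n with
  | zero => simp
  | succ n ih => rw [descPochhammer_succ_right, prod_range_succ, ih, C_eq_natCast]

theorem stirlingFirst_eq_coeff_descPochhammer (n j : ℕ) :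
    stirlingFirst n j = (descPochhammer ℚ n).coeff j := by
  rw [stirlingFirst, descPochhammer_eq_prod_range]

end

/-- `B_k = (-1)^k Σ_{j=0}^{k} Σ_{i=j}^{k} ((j+1)/(i+1)) S_1(i+1,j+1) S_2(k,i)`. -/
theorem bernoulli_stirling_identity (k : ℕ) :
    bernoulli k =
      (-1 : ℚ) ^ k *
        ∑ j ∈ Finset.range (k + 1), ∑ i ∈ Finset.Icc j k,
          ((j : ℚ) + 1) / ((i : ℚ) + 1) * stirlingFirst (i + 1) (j + 1) *
            stirlingSecond k i := by
  have hswap : ∑ j ∈ Finset.range (k + 1), ∑ i ∈ Finset.Icc j k,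
        ((j : ℚ) + 1) / ((i : ℚ) + 1) * stirlingFirst (i + 1) (j + 1) * stirlingSecond k i
      = ∑ i ∈ Finset.range (k + 1), ∑ j ∈ Finset.range (i + 1),
        ((j : ℚ) + 1) / ((i : ℚ) + 1) * stirlingFirst (i + 1) (j + 1) * stirlingSecond k i :=
    Finset.sum_comm' fun j i ↦ by simp only [Finset.mem_range, Finset.mem_Icc]; omega
  rw [bernoulli, hswap, bernoulli'_eq_sum_stirlingSecond_mul_derivative_descPochhammer]
  refine congrArg _ (Finset.sum_congr rfl fun i _ ↦ ?_)
  rw [derivative_eval_one_eq_sum_range (descPochhammer_natDegree ℚ (i + 1)).le, Finset.mul_sum]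
  refine Finset.sum_congr rfl fun j _ ↦ ?_
  rw [stirlingFirst_eq_coeff_descPochhammer]
  ring
end
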